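/- arXiv:0812.3485 — 3 statements merged into one kernel-verified Lean document; each statement's English description precedes it below -/
import Mathlib

section
/- Let μ be a boundedly finite Borel measure on E = [0,∞)² ∖ {(0,0)} that is homogeneous of degree −1, let ‖·‖ be a norm on ℝ² with ‖(1,0)‖ = 1 = ‖(0,1)‖, and let Φ be the spectral measure of μ with respect to ‖·‖. Then for every Borel measurable function f : E → [0,∞], ∫_E f dμ = ∫_{[0,π/2]} ∫₀^∞ f( r·sinθ/‖(sinθ,cosθ)‖ , r·cosθ/‖(sinθ,cosθ)‖ ) r⁻² dr Φ(dθ); that is, in the polar coordinates r = ‖z‖, θ = θ(z), the measure μ is the product measure r⁻² dr Φ(dθ). -/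
/-!
In the polar coordinates `z ↦ (ang z, ‖z‖)`, homogeneity of degree `-1` gives
`μ {ang z ∈ B, ‖z‖ ≥ a} = a⁻¹ Φ(B)` for `a > 0`, while `{‖z‖ ≤ 0}` misses `E`. So the image of `μ`
agrees with `Φ ⊗ r⁻² dr` on the rectangles `B × [a, ∞)`, `a > 0`, and `B × (-∞, a]`, `a ≤ 0`, a
π-system generating the Borel sets. Bounded finiteness makes `Φ` finite, so the two measures
coincide. As `(θ, r) ↦ r (sin θ, cos θ) / ‖(sin θ, cos θ)‖` inverts the polar coordinates on `E`,
`μ` is the image of `Φ ⊗ r⁻² dr` under it, and the formula follows by Tonelli.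
-/

open MeasureTheory Set Real Filter Topology
open scoped ENNReal Pointwise

noncomputable section

/-- The cone `E = [0,∞)² \ {(0,0)}` as a subset of `ℝ²`. -/
def Econe : Set (ℝ × ℝ) := (Ici 0 ×ˢ Ici 0) \ {((0 : ℝ), (0 : ℝ))}

/-- The angular coordinate `θ(z) = arctan (z₁ / z₂)`, with `θ(z) = π/2` when `z₂ = 0`. -/
def ang (z : ℝ × ℝ) : ℝ := if z.2 = 0 then π / 2 else Real.arctan (z.1 / z.2)

lemma mem_Econe {z : ℝ × ℝ} : z ∈ Econe ↔ 0 ≤ z.1 ∧ 0 ≤ z.2 ∧ z ≠ 0 := by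
  simp only [Econe, Set.mem_sdiff, mem_prod, mem_Ici, mem_singleton_iff, Prod.mk_zero_zero,
    and_assoc]

lemma measurableSet_Econe : MeasurableSet Econe :=
  (measurableSet_Ici.prod measurableSet_Ici).diff (measurableSet_singleton _)

lemma measurable_ang : Measurable ang :=
  Measurable.ite (measurable_snd (measurableSet_singleton 0)) measurable_const
    (measurable_arctan.comp (measurable_fst.div measurable_snd))

lemma ang_smul {c : ℝ} (hc : 0 < c) (z : ℝ × ℝ) : ang (c • z) = ang z := by
  simp only [ang, Prod.smul_fst, Prod.smul_snd, smul_eq_mul, mul_eq_zero, hc.ne', false_or,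
    mul_div_mul_left _ _ hc.ne']

lemma smul_mem_Econe {c : ℝ} (hc : 0 < c) {z : ℝ × ℝ} (hz : z ∈ Econe) : c • z ∈ Econe := by
  obtain ⟨h₁, h₂, h₀⟩ := mem_Econe.1 hz
  exact mem_Econe.2 ⟨mul_nonneg hc.le h₁, mul_nonneg hc.le h₂, smul_ne_zero hc.ne' h₀⟩

lemma ang_mem_Icc {z : ℝ × ℝ} (hz : z ∈ Econe) : ang z ∈ Icc 0 (π / 2) := by
  obtain ⟨h₁, h₂, -⟩ := mem_Econe.1 hz
  unfold ang
  split_ifs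
  · exact ⟨by positivity, le_rfl⟩
  · exact ⟨arctan_nonneg.2 (div_nonneg h₁ h₂), (arctan_lt_pi_div_two _).le⟩

lemma exists_pos_smul_sin_cos_ang {z : ℝ × ℝ} (hz : z ∈ Econe) :
    ∃ c : ℝ, 0 < c ∧ c • (sin (ang z), cos (ang z)) = z := by
  obtain ⟨h₁, h₂, h₀⟩ := mem_Econe.1 hz
  by_cases hz₂ : z.2 = 0
  · have hz₁ : 0 < z.1 := h₁.lt_of_ne fun h => h₀ (Prod.ext h.symm hz₂)
    refine ⟨z.1, hz₁, ?_⟩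
    simp [ang, hz₂, Prod.ext_iff]
  · have hz₂ : 0 < z.2 := h₂.lt_of_ne' hz₂
    have hs : 0 < √(1 + (z.1 / z.2) ^ 2) := sqrt_pos.2 (by positivity)
    simp only [ang, hz₂.ne', if_false, sin_arctan, cos_arctan, Prod.smul_mk, smul_eq_mul]
    generalize √(1 + (z.1 / z.2) ^ 2) = s at hs ⊢
    refine ⟨z.2 * s, by positivity, ?_⟩
    ext <;> field_simp

lemma Seminorm.continuous_of_finiteDimensional {E : Type*} [NormedAddCommGroup E]
    [NormedSpace ℝ E] [FiniteDimensional ℝ E] (p : Seminorm ℝ E) : Continuous p :=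
  continuousOn_univ.1 (p.convexOn.continuousOn isOpen_univ)

lemma Seminorm.le_abs_fst_add_abs_snd (p : Seminorm ℝ (ℝ × ℝ)) (z : ℝ × ℝ) :
    p z ≤ |z.1| * p (1, 0) + |z.2| * p (0, 1) := by
  calc p z = p (z.1 • (1, 0) + z.2 • (0, 1)) := by simp
    _ ≤ p (z.1 • (1, 0)) + p (z.2 • (0, 1)) := map_add_le_add p _ _
    _ = |z.1| * p (1, 0) + |z.2| * p (0, 1) := by
      rw [map_smul_eq_mul, map_smul_eq_mul, norm_eq_abs, norm_eq_abs]

def polarToCone (p : Seminorm ℝ (ℝ × ℝ)) (q : ℝ × ℝ) : ℝ × ℝ :=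
  (q.2 / p (sin q.1, cos q.1)) • (sin q.1, cos q.1)

lemma measurable_polarToCone (p : Seminorm ℝ (ℝ × ℝ)) : Measurable (polarToCone p) := by
  have hsc : Measurable fun q : ℝ × ℝ => (sin q.1, cos q.1) :=
    (measurable_sin.comp measurable_fst).prodMk (measurable_cos.comp measurable_fst)
  exact (measurable_snd.div (p.continuous_of_finiteDimensional.measurable.comp hsc)).smul hsc

lemma polarToCone_ang {p : Seminorm ℝ (ℝ × ℝ)} (hp : ∀ z, p z = 0 → z = 0) {z : ℝ × ℝ}
    (hz : z ∈ Econe) : polarToCone p (ang z, p z) = z := by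
  obtain ⟨c, hc, hcz⟩ := exists_pos_smul_sin_cos_ang hz
  set u : ℝ × ℝ := (sin (ang z), cos (ang z))
  have hu : p u ≠ 0 := fun h => by
    have hsin : sin (ang z) = 0 := congrArg Prod.fst (hp u h)
    have hcos : cos (ang z) = 0 := congrArg Prod.snd (hp u h)
    simpa [hsin, hcos] using sin_sq_add_cos_sq (ang z)
  have hpz : p z = c * p u := by rw [← hcz, map_smul_eq_mul, norm_eq_abs, abs_of_pos hc]
  rw [polarToCone, hpz, mul_div_cancel_right₀ _ hu, hcz]

def radialMeasure : Measure ℝ :=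
  (volume.restrict (Ioi 0)).withDensity fun r => ENNReal.ofReal (r ^ 2)⁻¹

lemma lintegral_radialMeasure (f : ℝ → ℝ≥0∞) :
    ∫⁻ r, f r ∂radialMeasure = ∫⁻ r in Ioi 0, f r * ENNReal.ofReal (r ^ 2)⁻¹ := by
  rw [radialMeasure, lintegral_withDensity_eq_lintegral_mul_non_measurable _ (by fun_prop)
    (ae_of_all _ fun _ => ENNReal.ofReal_lt_top)]
  simp only [Pi.mul_apply, mul_comm]

lemma radialMeasure_Ici {a : ℝ} (ha : 0 < a) : radialMeasure (Ici a) = ENNReal.ofReal a⁻¹ := by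
  have hrpow : ∀ r ∈ Ioi a, (r ^ 2)⁻¹ = r ^ (-2 : ℝ) := fun r hr => by
    rw [rpow_neg (ha.trans hr).le, rpow_two]
  rw [radialMeasure, withDensity_apply _ measurableSet_Ici,
    Measure.restrict_restrict measurableSet_Ici, inter_eq_left.2 (Ici_subset_Ioi.2 ha),
    ← setLIntegral_congr Ioi_ae_eq_Ici,
    setLIntegral_congr_fun measurableSet_Ioi fun r hr => congrArg ENNReal.ofReal (hrpow r hr),
    ← ofReal_integral_eq_lintegral_ofReal (integrableOn_Ioi_rpow_of_lt (by norm_num) ha)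
      (ae_restrict_of_forall_mem measurableSet_Ioi fun r hr =>
        (rpow_pos_of_pos (ha.trans hr) _).le),
    integral_Ioi_rpow_of_lt (by norm_num) ha]
  norm_num [rpow_neg_one]

lemma radialMeasure_Iic {a : ℝ} (ha : a ≤ 0) : radialMeasure (Iic a) = 0 :=
  withDensity_absolutelyContinuous _ _ <| by
    rw [Measure.restrict_apply measurableSet_Iic, Iic_inter_Ioi, Ioc_eq_empty ha.not_gt,
      measure_empty]

/-- The half-lines `Ici a` with `a ≤ 0` have infinite `radialMeasure`, hence these two families. -/
def radialHalfLines : Set (Set ℝ) := Iic '' Iic 0 ∪ Ici '' Ioi 0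

lemma isPiSystem_radialHalfLines : IsPiSystem radialHalfLines := by
  rintro _ (⟨a, ha, rfl⟩ | ⟨a, ha, rfl⟩) _ (⟨b, hb, rfl⟩ | ⟨b, hb, rfl⟩) ⟨x, hxa, hxb⟩
  · exact Or.inl ⟨min a b, (min_le_left a b).trans ha, Iic_inter_Iic.symm⟩
  · exact absurd ((mem_Ici.1 hxb).trans (mem_Iic.1 hxa)) (not_le.2 (lt_of_le_of_lt ha hb))
  · exact absurd ((mem_Ici.1 hxa).trans (mem_Iic.1 hxb)) (not_le.2 (lt_of_le_of_lt hb ha))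
  · exact Or.inr ⟨max a b, lt_max_of_lt_left (mem_Ioi.1 ha), Ici_inter_Ici.symm⟩

lemma generateFrom_radialHalfLines :
    MeasurableSpace.generateFrom radialHalfLines = (inferInstance : MeasurableSpace ℝ) := by
  refine le_antisymm (MeasurableSpace.generateFrom_le ?_) ?_
  · rintro _ (⟨a, -, rfl⟩ | ⟨a, -, rfl⟩)
    exacts [measurableSet_Iic, measurableSet_Ici]
  rw [BorelSpace.measurable_eq (α := ℝ), borel_eq_generateFrom_Ici]
  refine MeasurableSpace.generateFrom_le ?_
  rintro _ ⟨a, rfl⟩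
  rcases lt_or_ge 0 a with ha | ha
  · exact MeasurableSpace.measurableSet_generateFrom (Or.inr ⟨a, ha, rfl⟩)
  have hIio : ⋃ n : ℕ, Iic (a - 1 / (n + 1)) = Iio a :=
    iUnion_Iic_eq_Iio_of_lt_of_tendsto (fun n => sub_lt_self a Nat.one_div_pos_of_nat)
      (by simpa using tendsto_one_div_add_atTop_nhds_zero_nat.const_sub a)
  rw [← compl_Iio, ← hIio]
  refine (MeasurableSet.iUnion fun n => MeasurableSpace.measurableSet_generateFrom ?_).compl
  exact Or.inl ⟨_, (sub_lt_self a Nat.one_div_pos_of_nat).le.trans ha, rfl⟩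

def radialMeasure.finiteSpanningSetsIn : radialMeasure.FiniteSpanningSetsIn radialHalfLines where
  set n := if n = 0 then Iic 0 else Ici (n : ℝ)⁻¹
  set_mem n := by
    split_ifs with hn
    · exact Or.inl ⟨0, le_refl (0 : ℝ), rfl⟩
    · exact Or.inr ⟨_, mem_Ioi.2 (inv_pos.2 (Nat.cast_pos.2 (Nat.pos_of_ne_zero hn))), rfl⟩
  finite n := by
    split_ifs with hn
    · simp [radialMeasure_Iic le_rfl]
    · simp [radialMeasure_Ici (inv_pos.2 (Nat.cast_pos.2 (Nat.pos_of_ne_zero hn)))]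
  spanning := by
    refine eq_univ_of_forall fun x => mem_iUnion.2 ?_
    rcases le_or_gt x 0 with hx | hx
    · exact ⟨0, by simpa using hx⟩
    · obtain ⟨n, hn⟩ := exists_nat_gt x⁻¹
      have hn0 : n ≠ 0 := by rintro rfl; exact (inv_pos.2 hx).not_gt (by simpa using hn)
      exact ⟨n, by simpa [hn0] using (inv_lt_of_inv_lt₀ hx hn).le⟩

instance : SigmaFinite radialMeasure :=
  radialMeasure.finiteSpanningSetsIn.sigmaFinite

lemma prod_radialMeasure_eq {α : Type*} [MeasurableSpace α] {Φ : Measure α} [IsFiniteMeasure Φ]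
    {ν : Measure (α × ℝ)}
    (hIci : ∀ B, MeasurableSet B → ∀ a > 0, ν (B ×ˢ Ici a) = ENNReal.ofReal a⁻¹ * Φ B)
    (hIic : ∀ a ≤ 0, ν (univ ×ˢ Iic a) = 0) : Φ.prod radialMeasure = ν :=
  Measure.prod_eq_generateFrom MeasurableSpace.generateFrom_measurableSet
    generateFrom_radialHalfLines MeasurableSpace.isPiSystem_measurableSet
    isPiSystem_radialHalfLines Φ.toFiniteSpanningSetsIn radialMeasure.finiteSpanningSetsIn
    fun s hs t ht => by
      rcases ht with ⟨a, ha, rfl⟩ | ⟨a, ha, rfl⟩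
      · rw [radialMeasure_Iic ha, mul_zero]
        exact measure_mono_null (prod_mono (subset_univ s) le_rfl) (hIic a ha)
      · rw [hIci s hs a ha, radialMeasure_Ici ha, mul_comm]

section Cone

variable {μ : Measure (ℝ × ℝ)} {p : Seminorm ℝ (ℝ × ℝ)}

lemma smul_setOf_one_le_seminorm {B : Set ℝ} {a : ℝ} (ha : 0 < a) :
    a • {z | z ∈ Econe ∧ 1 ≤ p z ∧ ang z ∈ B} = ang ⁻¹' B ∩ p ⁻¹' Ici a ∩ Econe := by
  ext z
  have hpz : p (a⁻¹ • z) = a⁻¹ * p z := by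
    rw [map_smul_eq_mul, norm_eq_abs, abs_of_pos (inv_pos.2 ha)]
  have hE : a⁻¹ • z ∈ Econe ↔ z ∈ Econe :=
    ⟨fun h => by simpa [ha.ne'] using smul_mem_Econe ha h, smul_mem_Econe (inv_pos.2 ha)⟩
  rw [mem_smul_set_iff_inv_smul_mem₀ ha.ne']
  simp only [mem_ofPred_eq, mem_inter_iff, mem_preimage, mem_Ici, hpz, hE,
    ang_smul (inv_pos.2 ha), le_inv_mul_iff₀ ha, mul_one]
  tauto

lemma measure_preimage_ang_inter_preimage_Ici (hμE : μ Econeᶜ = 0)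
    (hhom : ∀ B : Set (ℝ × ℝ), B ⊆ Econe → MeasurableSet B → ∀ c > (0 : ℝ),
      μ (c • B) = ENNReal.ofReal c⁻¹ * μ B)
    {B : Set ℝ} (hB : MeasurableSet B) {a : ℝ} (ha : 0 < a) :
    μ (ang ⁻¹' B ∩ p ⁻¹' Ici a) =
      ENNReal.ofReal a⁻¹ * μ {z | z ∈ Econe ∧ 1 ≤ p z ∧ ang z ∈ B} := by
  have hmeas : MeasurableSet {z | z ∈ Econe ∧ 1 ≤ p z ∧ ang z ∈ B} :=
    measurableSet_Econe.inter
      ((measurableSet_le measurable_const p.continuous_of_finiteDimensional.measurable).inter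
        (measurable_ang hB))
  rw [← measure_inter_conull hμE, ← smul_setOf_one_le_seminorm ha]
  exact hhom _ (fun z hz => hz.1) hmeas a ha

lemma measure_preimage_Iic_of_nonpos (hμE : μ Econeᶜ = 0) (hp : ∀ z, p z = 0 → z = 0)
    {a : ℝ} (ha : a ≤ 0) : μ (p ⁻¹' Iic a) = 0 :=
  measure_mono_null (fun z hz hzE =>
    (mem_Econe.1 hzE).2.2 (hp z (le_antisymm ((mem_Iic.1 hz).trans ha) (apply_nonneg p z)))) hμE

lemma setOf_one_le_seminorm_subset (h10 : p (1, 0) = 1) (h01 : p (0, 1) = 1) (B : Set ℝ) :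
    {z | z ∈ Econe ∧ 1 ≤ p z ∧ ang z ∈ B} ⊆ {z | z ∈ Econe ∧ 1 / 2 ≤ max z.1 z.2} := by
  rintro z ⟨hzE, hpz, -⟩
  obtain ⟨h₁, h₂, -⟩ := mem_Econe.1 hzE
  have := p.le_abs_fst_add_abs_snd z
  rw [h10, h01, abs_of_nonneg h₁, abs_of_nonneg h₂] at this
  exact ⟨hzE, by linarith [le_max_left z.1 z.2, le_max_right z.1 z.2]⟩

lemma map_polarToCone_prod_radialMeasure (hμE : μ Econeᶜ = 0)
    (hhom : ∀ B : Set (ℝ × ℝ), B ⊆ Econe → MeasurableSet B → ∀ c > (0 : ℝ),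
      μ (c • B) = ENNReal.ofReal c⁻¹ * μ B)
    (hp : ∀ z, p z = 0 → z = 0) {Φ : Measure ℝ} [IsFiniteMeasure Φ]
    (hΦ : ∀ B : Set ℝ, MeasurableSet B → Φ B = μ {z | z ∈ Econe ∧ 1 ≤ p z ∧ ang z ∈ B}) :
    (Φ.prod radialMeasure).map (polarToCone p) = μ := by
  have hpolar : Measurable fun z => (ang z, p z) :=
    measurable_ang.prodMk p.continuous_of_finiteDimensional.measurable
  have hmap : Φ.prod radialMeasure = μ.map fun z => (ang z, p z) := by
    refine prod_radialMeasure_eq (fun B hB a ha => ?_) fun a ha => ?_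
    · rw [Measure.map_apply hpolar (hB.prod measurableSet_Ici), mk_preimage_prod,
        measure_preimage_ang_inter_preimage_Ici hμE hhom hB ha, hΦ B hB]
    · rw [Measure.map_apply hpolar (MeasurableSet.univ.prod measurableSet_Iic), mk_preimage_prod,
        preimage_univ, univ_inter, measure_preimage_Iic_of_nonpos hμE hp ha]
  have hinv : polarToCone p ∘ (fun z => (ang z, p z)) =ᵐ[μ] id :=
    (ae_iff.2 hμE).mono fun z hz => polarToCone_ang hp hz
  rw [hmap, Measure.map_map (measurable_polarToCone p) hpolar, Measure.map_congr hinv,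
    Measure.map_id]

end Cone

theorem stmt2 (μ : Measure (ℝ × ℝ)) (hμE : μ Econeᶜ = 0)
    (hbf : ∀ ε > (0 : ℝ), μ {z | z ∈ Econe ∧ ε ≤ max z.1 z.2} < ⊤)
    (hhom : ∀ B : Set (ℝ × ℝ), B ⊆ Econe → MeasurableSet B → ∀ c > (0 : ℝ),
      μ (c • B) = ENNReal.ofReal c⁻¹ * μ B)
    (Nn : ℝ × ℝ → ℝ)
    (hN_add : ∀ z w, Nn (z + w) ≤ Nn z + Nn w)
    (hN_smul : ∀ (c : ℝ) (z), Nn (c • z) = |c| * Nn z)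
    (hN_zero : ∀ z, Nn z = 0 ↔ z = 0)
    (hN10 : Nn (1, 0) = 1) (hN01 : Nn (0, 1) = 1)
    (Φ : Measure ℝ)
    (hΦ : ∀ B : Set ℝ, MeasurableSet B →
      Φ B = μ {z | z ∈ Econe ∧ 1 ≤ Nn z ∧ ang z ∈ B}) :
    ∀ f : ℝ × ℝ → ℝ≥0∞, Measurable f →
      ∫⁻ z, f z ∂μ =
        ∫⁻ θ in Icc 0 (π / 2),
          ∫⁻ r in Ioi (0 : ℝ),
            f (r * Real.sin θ / Nn (Real.sin θ, Real.cos θ),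
               r * Real.cos θ / Nn (Real.sin θ, Real.cos θ)) *
              ENNReal.ofReal ((r ^ 2)⁻¹) ∂volume ∂Φ := by
  intro f hf
  let p : Seminorm ℝ (ℝ × ℝ) := Seminorm.of Nn hN_add fun c z => by rw [hN_smul, norm_eq_abs]
  have hΦp : ∀ B, MeasurableSet B → Φ B = μ {z | z ∈ Econe ∧ 1 ≤ p z ∧ ang z ∈ B} := hΦ
  have : IsFiniteMeasure Φ := ⟨by
    rw [hΦp univ MeasurableSet.univ]
    exact (measure_mono (setOf_one_le_seminorm_subset hN10 hN01 univ)).trans_lt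
      (hbf _ one_half_pos)⟩
  have hΦIcc : Φ.restrict (Icc 0 (π / 2)) = Φ :=
    Measure.restrict_eq_self_of_ae_mem <| ae_iff.2 <| (hΦp _ measurableSet_Icc.compl).trans
      (measure_mono_null (fun z hz => hz.2.2 (ang_mem_Icc hz.1)) measure_empty)
  have hg := measurable_polarToCone p
  rw [← map_polarToCone_prod_radialMeasure hμE hhom (fun z => (hN_zero z).1) hΦp,
    lintegral_map hf hg, lintegral_prod (fun q => f (polarToCone p q)) (hf.comp hg).aemeasurable,
    hΦIcc]
  refine lintegral_congr fun θ => ?_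
  simp only [lintegral_radialMeasure, polarToCone, Prod.smul_mk, smul_eq_mul, div_mul_eq_mul_div]
  rfl
end
end

section
/- Let μ be a boundedly finite Borel measure on E = [0,∞)² ∖ {(0,0)} that is homogeneous of degree −1, let ‖·‖ be a norm on ℝ² with ‖(1,0)‖ = 1 = ‖(0,1)‖, let Φ be the spectral measure of μ with respect to ‖·‖, and let Λ = ι_*μ be the pushforward of μ under ι(z₁,z₂) = (1/z₁, 1/z₂) (with 1/0 = ∞). Then for every u ∈ (0,∞): Λ({∞}×(0,u]) = u·Φ({0}) and Λ((0,u]×{∞}) = u·Φ({π/2}). -/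
open MeasureTheory Set Real Filter Topology
open scoped ENNReal Pointwise

noncomputable section

/-- The coordinatewise inversion `ι(z₁,z₂) = (1/z₁, 1/z₂)`, with values in `[0,∞]²`
and the convention `1/0 = ∞`. -/
def iota (z : ℝ × ℝ) : ℝ≥0∞ × ℝ≥0∞ := ((ENNReal.ofReal z.1)⁻¹, (ENNReal.ofReal z.2)⁻¹)


/-! On the axis `{z₁ = 0}` the preimage under `ι` of `{∞} × (0, u]` is the ray `{0} × [u⁻¹, ∞)`,
which is `u⁻¹ • ({0} × [1, ∞))`. Since `‖(0, t)‖ = t`, the ray `{0} × [1, ∞)` is exactly the part of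
`{‖z‖ ≥ 1}` at angle `0`, so homogeneity gives `Λ({∞} × (0, u]) = u · Φ({0})`. The other axis is
symmetric. -/

lemma measurable_iota : Measurable iota :=
  (ENNReal.measurable_ofReal.comp measurable_fst).inv.prodMk
    (ENNReal.measurable_ofReal.comp measurable_snd).inv

lemma zero_prod_mem_Econe_iff {y : ℝ} : ((0 : ℝ), y) ∈ Econe ↔ 0 < y := by
  simp only [Econe, Set.mem_sdiff, mem_prod, mem_Ici, mem_singleton_iff, Prod.mk.injEq]
  grind

lemma prod_zero_mem_Econe_iff {x : ℝ} : (x, (0 : ℝ)) ∈ Econe ↔ 0 < x := by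
  simp only [Econe, Set.mem_sdiff, mem_prod, mem_Ici, mem_singleton_iff, Prod.mk.injEq]
  grind

lemma zero_prod_Ici_subset_Econe {a : ℝ} (ha : 0 < a) : {0} ×ˢ Ici a ⊆ Econe := by
  rintro ⟨x, y⟩ ⟨rfl, hy⟩
  exact zero_prod_mem_Econe_iff.2 (ha.trans_le hy)

lemma Ici_prod_zero_subset_Econe {a : ℝ} (ha : 0 < a) : Ici a ×ˢ {0} ⊆ Econe := by
  rintro ⟨x, y⟩ ⟨hx, rfl⟩
  exact prod_zero_mem_Econe_iff.2 (ha.trans_le hx)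

lemma ang_eq_pi_div_two_iff {z : ℝ × ℝ} : ang z = π / 2 ↔ z.2 = 0 := by
  unfold ang
  split_ifs with h
  · simpa using h
  · simpa [h] using (arctan_lt_pi_div_two _).ne

lemma ang_eq_zero_iff {z : ℝ × ℝ} (hz : z ∈ Econe) : ang z = 0 ↔ z.1 = 0 := by
  obtain ⟨-, hne⟩ := hz
  unfold ang
  split_ifs with h
  · have : z.1 ≠ 0 := fun h1 => hne (Prod.ext h1 h)
    simp [pi_ne_zero, this]
  · simp [arctan_eq_zero_iff, h]

section HomogeneousFunction

variable {Nn : ℝ × ℝ → ℝ} (hN_smul : ∀ (c : ℝ) (z), Nn (c • z) = |c| * Nn z)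
include hN_smul

lemma apply_zero_prod_of_smul {y : ℝ} : Nn (0, y) = |y| * Nn (0, 1) := by
  simpa using hN_smul y (0, 1)

lemma apply_prod_zero_of_smul {x : ℝ} : Nn (x, 0) = |x| * Nn (1, 0) := by
  simpa using hN_smul x (1, 0)

lemma spectralSet_zero (hN01 : Nn (0, 1) = 1) :
    {z | z ∈ Econe ∧ 1 ≤ Nn z ∧ ang z ∈ ({0} : Set ℝ)} = {0} ×ˢ Ici 1 := by
  ext ⟨x, y⟩
  simp only [mem_ofPred_eq, mem_singleton_iff, mem_prod, mem_Ici]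
  constructor
  · rintro ⟨hz, hN, hang⟩
    obtain rfl : x = 0 := (ang_eq_zero_iff hz).1 hang
    rw [zero_prod_mem_Econe_iff] at hz
    rw [apply_zero_prod_of_smul hN_smul, hN01, mul_one, abs_of_pos hz] at hN
    exact ⟨rfl, hN⟩
  · rintro ⟨rfl, hy⟩
    have hz : ((0 : ℝ), y) ∈ Econe := zero_prod_mem_Econe_iff.2 (by linarith)
    refine ⟨hz, ?_, (ang_eq_zero_iff hz).2 rfl⟩
    rwa [apply_zero_prod_of_smul hN_smul, hN01, mul_one, abs_of_nonneg (by linarith)]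

lemma spectralSet_pi_div_two (hN10 : Nn (1, 0) = 1) :
    {z | z ∈ Econe ∧ 1 ≤ Nn z ∧ ang z ∈ ({π / 2} : Set ℝ)} = Ici 1 ×ˢ {0} := by
  ext ⟨x, y⟩
  simp only [mem_ofPred_eq, mem_singleton_iff, mem_prod, mem_Ici, ang_eq_pi_div_two_iff]
  constructor
  · rintro ⟨hz, hN, rfl⟩
    rw [prod_zero_mem_Econe_iff] at hz
    rw [apply_prod_zero_of_smul hN_smul, hN10, mul_one, abs_of_pos hz] at hN
    exact ⟨hN, rfl⟩
  · rintro ⟨hx, rfl⟩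
    refine ⟨prod_zero_mem_Econe_iff.2 (by linarith), ?_, rfl⟩
    rwa [apply_prod_zero_of_smul hN_smul, hN10, mul_one, abs_of_nonneg (by linarith)]

end HomogeneousFunction

lemma inv_ofReal_mem_Ioc_iff {u x : ℝ} (hu : 0 < u) :
    (ENNReal.ofReal x)⁻¹ ∈ Ioc 0 (ENNReal.ofReal u) ↔ u⁻¹ ≤ x := by
  rcases le_or_gt x 0 with hx | hx
  · have : ¬ u⁻¹ ≤ x := by have := inv_pos.2 hu; linarith
    simp [ENNReal.ofReal_of_nonpos hx, this]
  · rw [mem_Ioc, ENNReal.inv_pos, ENNReal.inv_le_iff_inv_le, ← ENNReal.ofReal_inv_of_pos hu,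
      ENNReal.ofReal_le_ofReal_iff hx.le]
    simp

lemma iota_preimage_top_prod_Ioc_inter_Econe {u : ℝ} (hu : 0 < u) :
    iota ⁻¹' ({⊤} ×ˢ Ioc 0 (ENNReal.ofReal u)) ∩ Econe = {0} ×ˢ Ici u⁻¹ := by
  ext ⟨x, y⟩
  have hu' : 0 < u⁻¹ := inv_pos.2 hu
  simp only [Econe, iota, mem_inter_iff, mem_preimage, mem_prod, mem_singleton_iff, mem_Ici,
    ENNReal.inv_eq_top, ENNReal.ofReal_eq_zero, inv_ofReal_mem_Ioc_iff hu, Set.mem_sdiff,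
    Prod.mk.injEq]
  grind

lemma iota_preimage_Ioc_prod_top_inter_Econe {u : ℝ} (hu : 0 < u) :
    iota ⁻¹' (Ioc 0 (ENNReal.ofReal u) ×ˢ {⊤}) ∩ Econe = Ici u⁻¹ ×ˢ {0} := by
  ext ⟨x, y⟩
  have hu' : 0 < u⁻¹ := inv_pos.2 hu
  simp only [Econe, iota, mem_inter_iff, mem_preimage, mem_prod, mem_singleton_iff, mem_Ici,
    ENNReal.inv_eq_top, ENNReal.ofReal_eq_zero, inv_ofReal_mem_Ioc_iff hu, Set.mem_sdiff,
    Prod.mk.injEq]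
  grind

section OrderedField

variable {K : Type*} [Field K] [LinearOrder K] [IsStrictOrderedRing K] {c : K}

lemma smul_zero_prod_Ici (hc : 0 < c) (a : K) :
    c • ({0} ×ˢ Ici a : Set (K × K)) = {0} ×ˢ Ici (c * a) := by
  rw [smul_set_prod, smul_set_singleton, smul_zero, LinearOrderedField.smul_Ici hc]

lemma smul_Ici_prod_zero (hc : 0 < c) (a : K) :
    c • (Ici a ×ˢ {0} : Set (K × K)) = Ici (c * a) ×ˢ {0} := by
  rw [smul_set_prod, smul_set_singleton, smul_zero, LinearOrderedField.smul_Ici hc]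

end OrderedField

theorem stmt8_general (μ : Measure (ℝ × ℝ)) (hμE : μ Econeᶜ = 0)
    (hhom : ∀ B : Set (ℝ × ℝ), B ⊆ Econe → MeasurableSet B → ∀ c > (0 : ℝ),
      μ (c • B) = ENNReal.ofReal c⁻¹ * μ B)
    (Nn : ℝ × ℝ → ℝ)
    (hN_smul : ∀ (c : ℝ) (z), Nn (c • z) = |c| * Nn z)
    (hN10 : Nn (1, 0) = 1) (hN01 : Nn (0, 1) = 1)
    (Φ : Measure ℝ)
    (hΦ : ∀ B : Set ℝ, MeasurableSet B →
      Φ B = μ {z | z ∈ Econe ∧ 1 ≤ Nn z ∧ ang z ∈ B})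
    (Λ : Measure (ℝ≥0∞ × ℝ≥0∞)) (hΛ : Λ = μ.map iota) :
    ∀ u > (0 : ℝ),
      Λ ({⊤} ×ˢ Ioc 0 (ENNReal.ofReal u)) = ENNReal.ofReal u * Φ {0} ∧
      Λ (Ioc 0 (ENNReal.ofReal u) ×ˢ {⊤}) = ENNReal.ofReal u * Φ {π / 2} := by
  intro u hu
  have hscale : ∀ B ⊆ Econe, MeasurableSet B → μ (u⁻¹ • B) = ENNReal.ofReal u * μ B :=
    fun B hB hBm => by simpa using hhom B hB hBm u⁻¹ (inv_pos.2 hu)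
  have hΛ_apply : ∀ s, MeasurableSet s → Λ s = μ (iota ⁻¹' s ∩ Econe) := fun s hs => by
    rw [hΛ, Measure.map_apply measurable_iota hs, measure_inter_conull hμE]
  constructor
  · rw [hΛ_apply _ ((measurableSet_singleton _).prod measurableSet_Ioc),
      iota_preimage_top_prod_Ioc_inter_Econe hu, hΦ _ (measurableSet_singleton _),
      spectralSet_zero hN_smul hN01,
      ← hscale _ (zero_prod_Ici_subset_Econe one_pos)
        ((measurableSet_singleton _).prod measurableSet_Ici),
      smul_zero_prod_Ici (inv_pos.2 hu), mul_one]
  · rw [hΛ_apply _ (measurableSet_Ioc.prod (measurableSet_singleton _)),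
      iota_preimage_Ioc_prod_top_inter_Econe hu, hΦ _ (measurableSet_singleton _),
      spectralSet_pi_div_two hN_smul hN10,
      ← hscale _ (Ici_prod_zero_subset_Econe one_pos)
        (measurableSet_Ici.prod (measurableSet_singleton _)),
      smul_Ici_prod_zero (inv_pos.2 hu), mul_one]

theorem stmt8 (μ : Measure (ℝ × ℝ)) (hμE : μ Econeᶜ = 0)
    (hbf : ∀ ε > (0 : ℝ), μ {z | z ∈ Econe ∧ ε ≤ max z.1 z.2} < ⊤)
    (hhom : ∀ B : Set (ℝ × ℝ), B ⊆ Econe → MeasurableSet B → ∀ c > (0 : ℝ),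
      μ (c • B) = ENNReal.ofReal c⁻¹ * μ B)
    (Nn : ℝ × ℝ → ℝ)
    (hN_add : ∀ z w, Nn (z + w) ≤ Nn z + Nn w)
    (hN_smul : ∀ (c : ℝ) (z), Nn (c • z) = |c| * Nn z)
    (hN_zero : ∀ z, Nn z = 0 ↔ z = 0)
    (hN10 : Nn (1, 0) = 1) (hN01 : Nn (0, 1) = 1)
    (Φ : Measure ℝ)
    (hΦ : ∀ B : Set ℝ, MeasurableSet B →
      Φ B = μ {z | z ∈ Econe ∧ 1 ≤ Nn z ∧ ang z ∈ B})
    (Λ : Measure (ℝ≥0∞ × ℝ≥0∞)) (hΛ : Λ = μ.map iota) :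
    ∀ u > (0 : ℝ),
      Λ ({⊤} ×ˢ Ioc 0 (ENNReal.ofReal u)) = ENNReal.ofReal u * Φ {0} ∧
      Λ (Ioc 0 (ENNReal.ofReal u) ×ˢ {⊤}) = ENNReal.ofReal u * Φ {π / 2} :=
  stmt8_general μ hμE hhom Nn hN_smul hN10 hN01 Φ hΦ Λ hΛ
end
end

section
/- Fix p ∈ [1,∞]. For every θ ∈ (0,π/2), ∬_{{(x,y) ∈ (0,∞)² : y ≤ min(x·tanθ, y_p(x))}} x·y·(x² + y²)^{−3/2} dx dy = ∫₀^θ ‖(sinϑ, cosϑ)‖_p dϑ. (This identifies the spectral measure of the bivariate Cauchy model, whose limit measure Λ has density λ(x,y) = xy(x²+y²)^{−3/2} on (0,∞)², as Φ_p(θ) = ∫₀^θ ‖(sinϑ,cosϑ)‖_p dϑ.) -/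
open MeasureTheory Set Real Filter Topology
open scoped ENNReal

noncomputable section

/-- The `L_p` norm on `ℝ²`, for `p ∈ [1,∞]`. -/
def lpnorm (p : ℝ≥0∞) (z : ℝ × ℝ) : ℝ :=
  if p = ⊤ then max |z.1| |z.2|
  else (|z.1| ^ p.toReal + |z.2| ^ p.toReal) ^ (1 / p.toReal)

/-- The function `y_p : [0,∞) → [0,∞]`: for `p < ∞`, `y_p(x) = ∞` on `[0,1]` and
`y_p(x) = (1 + 1/(x^p - 1))^{1/p}` on `(1,∞)`; for `p = ∞`, `y_∞(x) = ∞` on `[0,1)`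
and `y_∞(x) = 1` on `[1,∞)`. -/
def ypR (p : ℝ≥0∞) (x : ℝ) : ℝ≥0∞ :=
  if p = ⊤ then (if x < 1 then ⊤ else 1)
  else if x ≤ 1 then ⊤
  else ENNReal.ofReal ((1 + 1 / (x ^ p.toReal - 1)) ^ (1 / p.toReal))

/-!
In polar coordinates `z = (r cos φ, r sin φ)` the density `λ` is `cos φ sin φ / r²`, so against
the Jacobian `r` the measure `Λ` becomes `cos φ sin φ dr dφ`. Off the null line `x = 1`, the
constraint `y ≤ y_p(x)` says `‖(1/x, 1/y)‖_p ≥ 1`, which by homogeneity of the norm reads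
`r ≤ ‖(1/cos φ, 1/sin φ)‖_p`, while `y ≤ x tan θ` reads `φ ≤ θ`. Integrating out `r` leaves
`cos φ sin φ ‖(1/cos φ, 1/sin φ)‖_p = ‖(sin φ, cos φ)‖_p`, again by homogeneity.
-/

/-- The density `λ` of the limit measure `Λ`. -/
def cauchyDensity (z : ℝ × ℝ) : ℝ := z.1 * z.2 * (z.1 ^ 2 + z.2 ^ 2) ^ (-(3 : ℝ) / 2)

/-- The finite part of `C_{p,θ}`. -/
def regionC (p : ℝ≥0∞) (θ : ℝ) : Set (ℝ × ℝ) :=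
  {z | 0 < z.1 ∧ 0 < z.2 ∧ z.2 ≤ z.1 * tan θ ∧ ENNReal.ofReal z.2 ≤ ypR p z.1}

def radialBound (p : ℝ≥0∞) (φ : ℝ) : ℝ := lpnorm p ((cos φ)⁻¹, (sin φ)⁻¹)

def polarRegion (p : ℝ≥0∞) (θ : ℝ) : Set (ℝ × ℝ) :=
  {q | q.2 ∈ Ioc 0 θ ∧ q.1 ∈ Ioc 0 (radialBound p q.2)}

lemma continuous_lpnorm (p : ℝ≥0∞) : Continuous (lpnorm p) := by
  unfold lpnorm
  split_ifs
  · fun_prop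
  · have hc : 0 ≤ p.toReal := ENNReal.toReal_nonneg
    exact ((continuous_fst.abs.rpow_const fun _ => Or.inr hc).add
      (continuous_snd.abs.rpow_const fun _ => Or.inr hc)).rpow_const
      fun _ => Or.inr (by positivity)

lemma lpnorm_nonneg (p : ℝ≥0∞) (z : ℝ × ℝ) : 0 ≤ lpnorm p z := by
  unfold lpnorm
  split_ifs <;> positivity

lemma lpnorm_smul {p : ℝ≥0∞} (hp : p ≠ 0) {t : ℝ} (ht : 0 ≤ t) (z : ℝ × ℝ) :
    lpnorm p (t • z) = t * lpnorm p z := by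
  unfold lpnorm
  simp only [Prod.smul_fst, Prod.smul_snd, smul_eq_mul, abs_mul, abs_of_nonneg ht]
  split_ifs with htop
  · exact (mul_max_of_nonneg _ _ ht).symm
  · have hc : 0 < p.toReal := ENNReal.toReal_pos hp htop
    rw [mul_rpow ht (abs_nonneg _), mul_rpow ht (abs_nonneg _), ← mul_add,
      mul_rpow (by positivity) (by positivity), one_div, rpow_rpow_inv ht hc.ne']

lemma measurable_ypR (p : ℝ≥0∞) : Measurable (ypR p) := by
  unfold ypR
  split_ifs
  · exact Measurable.ite measurableSet_Iio measurable_const measurable_const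
  · exact Measurable.ite measurableSet_Iic measurable_const (by fun_prop)

/-- At `x = 1` this fails for `p = ∞`: `y_∞(1) = 1`, whereas `‖(1, 1/y)‖_∞ ≥ 1` for all `y`. -/
lemma ofReal_le_ypR_iff {p : ℝ≥0∞} (hp : p ≠ 0) {x y : ℝ} (hx : 0 < x) (hy : 0 < y)
    (hx1 : x ≠ 1) : ENNReal.ofReal y ≤ ypR p x ↔ 1 ≤ lpnorm p (x⁻¹, y⁻¹) := by
  unfold ypR lpnorm
  simp only [abs_inv, abs_of_pos hx, abs_of_pos hy]
  split_ifs with htop hlt hle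
  · simpa using Or.inl (one_le_inv₀ hx |>.2 hlt.le)
  · have : x⁻¹ < 1 := inv_lt_one_of_one_lt₀ (lt_of_le_of_ne (not_lt.1 hlt) (Ne.symm hx1))
    simp [ENNReal.ofReal_le_one, not_le.2 this, one_le_inv₀ hy]
  all_goals
    have hc : 0 < p.toReal := ENNReal.toReal_pos hp htop
    rw [one_div p.toReal, le_rpow_inv_iff_of_pos zero_le_one (by positivity) hc, one_rpow,
      inv_rpow hx.le, inv_rpow hy.le]
  · have : 1 ≤ (x ^ p.toReal)⁻¹ :=
      one_le_inv₀ (by positivity) |>.2 (rpow_le_one hx.le hle hc.le)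
    simp only [le_top, true_iff]
    linarith [inv_nonneg.2 (rpow_nonneg hy.le p.toReal)]
  · set a := x ^ p.toReal
    set b := y ^ p.toReal
    have ha : 1 < a := one_lt_rpow (lt_of_not_ge hle) hc
    have hb : 0 < b := by positivity
    rw [ENNReal.ofReal_le_ofReal_iff (by positivity),
      le_rpow_inv_iff_of_pos hy.le (by positivity) hc,
      show 1 + 1 / (a - 1) = a / (a - 1) by field_simp [(by linarith : a - 1 ≠ 0)]; ring,
      le_div_iff₀ (by linarith), inv_add_inv (by positivity) hb.ne', le_div_iff₀ (by positivity)]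
    constructor <;> intro h <;> linarith

lemma cos_pos_and_sin_pos_iff {φ : ℝ} (hφ : φ ∈ Ioo (-π) π) :
    0 < cos φ ∧ 0 < sin φ ↔ φ ∈ Ioo 0 (π / 2) := by
  refine ⟨fun ⟨hc, hs⟩ => ⟨?_, ?_⟩, fun h => ⟨?_, ?_⟩⟩
  · by_contra! h
    linarith [sin_nonpos_of_nonpos_of_neg_pi_le h hφ.1.le]
  · by_contra! h
    linarith [cos_nonpos_of_pi_div_two_le_of_le h (by linarith [hφ.2])]
  · exact cos_pos_of_mem_Ioo ⟨by linarith [h.1, pi_pos], h.2⟩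
  · exact sin_pos_of_pos_of_lt_pi h.1 (by linarith [h.2, pi_pos])

lemma sin_le_cos_mul_tan_iff {φ θ : ℝ} (hφ : φ ∈ Ioo (-(π / 2)) (π / 2))
    (hθ : θ ∈ Ioo (-(π / 2)) (π / 2)) : sin φ ≤ cos φ * tan θ ↔ φ ≤ θ := by
  rw [← strictMonoOn_tan.le_iff_le hφ hθ, tan_eq_sin_div_cos φ,
    div_le_iff₀ (cos_pos_of_mem_Ioo hφ), mul_comm]

lemma polarCoord_symm_mem_regionC_iff {p : ℝ≥0∞} (hp : p ≠ 0) {θ : ℝ}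
    (hθ : θ ∈ Ioo 0 (π / 2)) {q : ℝ × ℝ} (hq : q ∈ polarCoord.target)
    (hq1 : q.1 * cos q.2 ≠ 1) : polarCoord.symm q ∈ regionC p θ ↔ q ∈ polarRegion p θ := by
  obtain ⟨r, φ⟩ := q
  obtain ⟨hr, hφ⟩ : 0 < r ∧ φ ∈ Ioo (-π) π := hq
  simp only [polarCoord_symm_apply, regionC, polarRegion, mem_ofPred_eq,
    mul_pos_iff_of_pos_left hr]
  by_cases hφ' : φ ∈ Ioo 0 (π / 2)
  · obtain ⟨hc, hs⟩ := (cos_pos_and_sin_pos_iff hφ).2 hφ'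
    have hsmul : ((r * cos φ)⁻¹, (r * sin φ)⁻¹) = r⁻¹ • ((cos φ)⁻¹, (sin φ)⁻¹) := by
      rw [Prod.smul_mk, smul_eq_mul, smul_eq_mul, mul_inv, mul_inv]
    rw [mul_assoc, mul_le_mul_iff_right₀ hr,
      sin_le_cos_mul_tan_iff ⟨by linarith [hφ'.1, pi_pos], hφ'.2⟩
        ⟨by linarith [hθ.1, pi_pos], hθ.2⟩,
      ofReal_le_ypR_iff hp (by positivity) (by positivity) hq1, hsmul,
      lpnorm_smul hp (by positivity), ← div_eq_inv_mul, one_le_div₀ hr]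
    simp [hc, hs, hr, hφ'.1, radialBound]
  · have : ¬ (0 < φ ∧ φ ≤ θ) := fun h => hφ' ⟨h.1, h.2.trans_lt hθ.2⟩
    rw [← cos_pos_and_sin_pos_iff hφ] at hφ'
    simp only [mem_Ioc]
    tauto

lemma volume_mul_cos_eq_one : volume {q : ℝ × ℝ | q.1 * cos q.2 = 1} = 0 := by
  have hmeas : MeasurableSet {q : ℝ × ℝ | q.1 * cos q.2 = 1} :=
    measurableSet_eq_fun (by fun_prop) measurable_const
  rw [Measure.volume_eq_prod, Measure.prod_apply_symm hmeas]
  refine (lintegral_congr fun φ => ?_).trans lintegral_zero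
  refine measure_mono_null (fun r (hr : r * cos φ = 1) => ?_) (measure_singleton (cos φ)⁻¹)
  exact (inv_eq_of_mul_eq_one_left hr).symm

lemma mul_cauchyDensity_polarCoord_symm {q : ℝ × ℝ} (hr : 0 < q.1) :
    q.1 * cauchyDensity (polarCoord.symm q) = cos q.2 * sin q.2 := by
  obtain ⟨r, φ⟩ := q
  have hsq : (r * cos φ) ^ 2 + (r * sin φ) ^ 2 = r ^ 2 := by
    rw [mul_pow, mul_pow, ← mul_add, cos_sq_add_sin_sq, mul_one]
  have hpow : (r ^ 2) ^ (-(3 : ℝ) / 2) = (r ^ 3)⁻¹ := by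
    rw [← rpow_natCast, ← rpow_mul hr.le, ← rpow_natCast, ← rpow_neg hr.le]
    norm_num
  simp only [cauchyDensity, polarCoord_symm_apply, hsq, hpow]
  field_simp

lemma measurableSet_regionC (p : ℝ≥0∞) (θ : ℝ) : MeasurableSet (regionC p θ) :=
  (measurableSet_lt measurable_const measurable_fst).inter <|
    (measurableSet_lt measurable_const measurable_snd).inter <|
      (measurableSet_le measurable_snd (measurable_fst.mul_const _)).inter <|
        measurableSet_le measurable_snd.ennreal_ofReal ((measurable_ypR p).comp measurable_fst)

lemma measurable_radialBound (p : ℝ≥0∞) : Measurable (radialBound p) :=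
  (continuous_lpnorm p).measurable.comp (by fun_prop)

lemma measurableSet_polarRegion (p : ℝ≥0∞) (θ : ℝ) : MeasurableSet (polarRegion p θ) :=
  (measurableSet_Ioc.preimage measurable_snd).inter <|
    (measurableSet_lt measurable_const measurable_fst).inter <|
      measurableSet_le measurable_fst ((measurable_radialBound p).comp measurable_snd)

lemma polarRegion_subset_target {p : ℝ≥0∞} {θ : ℝ} (hθ : θ < π) :
    polarRegion p θ ⊆ polarCoord.target :=
  fun _ ⟨hφ, hr⟩ => ⟨hr.1, by linarith [hφ.1, pi_pos], hφ.2.trans_lt hθ⟩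

lemma ae_indicator_regionC_polarCoord_symm {p : ℝ≥0∞} (hp : p ≠ 0) {θ : ℝ}
    (hθ : θ ∈ Ioo 0 (π / 2)) :
    ∀ᵐ q ∂volume.restrict polarCoord.target,
      ENNReal.ofReal q.1 • (regionC p θ).indicator (fun z => ENNReal.ofReal (cauchyDensity z))
          (polarCoord.symm q) =
        (polarRegion p θ).indicator (fun q => ENNReal.ofReal (cos q.2 * sin q.2)) q := by
  filter_upwards [ae_restrict_mem polarCoord.open_target.measurableSet,
    ae_restrict_of_ae (measure_eq_zero_iff_ae_notMem.1 volume_mul_cos_eq_one)] with q hq hq1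
  by_cases hW : q ∈ polarRegion p θ
  · rw [indicator_of_mem ((polarCoord_symm_mem_regionC_iff hp hθ hq hq1).2 hW),
      indicator_of_mem hW, smul_eq_mul, ← ENNReal.ofReal_mul hq.1.le,
      mul_cauchyDensity_polarCoord_symm hq.1]
  · rw [indicator_of_notMem (mt (polarCoord_symm_mem_regionC_iff hp hθ hq hq1).1 hW),
      indicator_of_notMem hW, smul_zero]

lemma setLIntegral_polarRegion (p : ℝ≥0∞) (θ : ℝ) :
    ∫⁻ q in polarRegion p θ, ENNReal.ofReal (cos q.2 * sin q.2) =
      ∫⁻ φ in Ioc 0 θ, ENNReal.ofReal (cos φ * sin φ) * ENNReal.ofReal (radialBound p φ) := by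
  set g : ℝ × ℝ → ℝ≥0∞ := fun q => ENNReal.ofReal (cos q.2 * sin q.2)
  have hg : Measurable g := by fun_prop
  rw [← lintegral_indicator (measurableSet_polarRegion p θ), Measure.volume_eq_prod,
    lintegral_prod_symm' _ (hg.indicator (measurableSet_polarRegion p θ)),
    ← lintegral_indicator measurableSet_Ioc]
  congr 1 with φ
  by_cases hφ : φ ∈ Ioc 0 θ
  · have hslice : ∀ r, (polarRegion p θ).indicator g (r, φ) =
        (Ioc 0 (radialBound p φ)).indicator (fun _ => ENNReal.ofReal (cos φ * sin φ)) r := by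
      intro r
      simp [g, indicator_apply, polarRegion, hφ.1, hφ.2]
    simp_rw [hslice]
    rw [lintegral_indicator_const measurableSet_Ioc, volume_Ioc, sub_zero, indicator_of_mem hφ]
  · rw [mem_Ioc] at hφ
    simp [polarRegion, hφ]

lemma cos_mul_sin_mul_radialBound {p : ℝ≥0∞} (hp : p ≠ 0) {φ : ℝ} (hc : 0 < cos φ)
    (hs : 0 < sin φ) : cos φ * sin φ * radialBound p φ = lpnorm p (sin φ, cos φ) := by
  rw [radialBound, ← lpnorm_smul hp (by positivity), Prod.smul_mk, smul_eq_mul, smul_eq_mul]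
  congr 2 <;> field_simp

theorem stmt15 (p : ℝ≥0∞) (hp : 1 ≤ p) :
    ∀ θ ∈ Ioo (0 : ℝ) (π / 2),
      (∫⁻ z in {z : ℝ × ℝ | 0 < z.1 ∧ 0 < z.2 ∧ z.2 ≤ z.1 * Real.tan θ ∧
          ENNReal.ofReal z.2 ≤ ypR p z.1},
        ENNReal.ofReal (z.1 * z.2 * (z.1 ^ 2 + z.2 ^ 2) ^ (-(3 : ℝ) / 2)) ∂volume) =
      ENNReal.ofReal (∫ ϑ in (0 : ℝ)..θ, lpnorm p (Real.sin ϑ, Real.cos ϑ)) := by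
  intro θ hθ
  have hp0 : p ≠ 0 := (zero_lt_one.trans_le hp).ne'
  have hint : IntegrableOn (fun φ => lpnorm p (sin φ, cos φ)) (Ioc 0 θ) :=
    ((continuous_lpnorm p).comp (by fun_prop)).integrableOn_Ioc
  calc ∫⁻ z in regionC p θ, ENNReal.ofReal (cauchyDensity z)
      = ∫⁻ q in polarCoord.target, ENNReal.ofReal q.1 • (regionC p θ).indicator
          (fun z => ENNReal.ofReal (cauchyDensity z)) (polarCoord.symm q) := by
        rw [lintegral_comp_polarCoord_symm, lintegral_indicator (measurableSet_regionC p θ)]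
    _ = ∫⁻ q in polarRegion p θ, ENNReal.ofReal (cos q.2 * sin q.2) := by
        rw [lintegral_congr_ae (ae_indicator_regionC_polarCoord_symm hp0 hθ),
          lintegral_indicator (measurableSet_polarRegion p θ),
          Measure.restrict_restrict (measurableSet_polarRegion p θ),
          inter_eq_self_of_subset_left (polarRegion_subset_target (by linarith [hθ.2, pi_pos]))]
    _ = ∫⁻ φ in Ioc 0 θ, ENNReal.ofReal (cos φ * sin φ) * ENNReal.ofReal (radialBound p φ) :=
        setLIntegral_polarRegion p θ
    _ = ∫⁻ φ in Ioc 0 θ, ENNReal.ofReal (lpnorm p (sin φ, cos φ)) := by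
        refine setLIntegral_congr_fun measurableSet_Ioc fun φ hφ => ?_
        obtain ⟨hc, hs⟩ := (cos_pos_and_sin_pos_iff ⟨by linarith [hφ.1, pi_pos],
          by linarith [hφ.2, hθ.2, pi_pos]⟩).2 ⟨hφ.1, hφ.2.trans_lt hθ.2⟩
        rw [← ENNReal.ofReal_mul (by positivity), cos_mul_sin_mul_radialBound hp0 hc hs]
    _ = _ := by
        rw [intervalIntegral.integral_of_le hθ.1.le,
          ofReal_integral_eq_lintegral_ofReal hint (ae_of_all _ fun _ => lpnorm_nonneg p _)]
end
end
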